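/- In the reduced free group K₃ on generators x₁, x₂, x₃, the basis commutators [[x₂,x₁],x₃] and [[x₃,x₁],x₂] are nontrivial, i.e., [[x₂,x₁],x₃] ≠ 1 and [[x₃,x₁],x₂] ≠ 1. -/

import Mathlib

/-- The commutator `[x, y] = x⁻¹ y⁻¹ x y` used in the paper. -/
def pcomm {G : Type*} [Group G] (x y : G) : G := x⁻¹ * y⁻¹ * x * y

/-- The relators of the reduced free group: `[xᵢ, g⁻¹ xᵢ g]` for every generator `xᵢ`
and every `g` in the free group. -/
def reducedRels (n : ℕ) : Set (FreeGroup (Fin n)) :=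
  { x | ∃ (i : Fin n) (g : FreeGroup (Fin n)),
        x = pcomm (FreeGroup.of i) (g⁻¹ * FreeGroup.of i * g) }

/-- The reduced free group `K_n`, the quotient of the free group `F_n` by the normal
closure of the relators `[xᵢ, g⁻¹ xᵢ g]`. -/
abbrev K (n : ℕ) := FreeGroup (Fin n) ⧸ Subgroup.normalClosure (reducedRels n)

/-- The generator `x_{i+1}` of `K_n` (0-based index `i`). -/
def xg {n : ℕ} (i : Fin n) : K n := QuotientGroup.mk (FreeGroup.of i)

/-!
Send `x₁, x₂, x₃` to the transvections `1 + E₀₁, 1 + E₁₂, 1 + E₂₃` in `SL₄(𝔽₂)`. Every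
conjugate of `1 + E_pq` (`p < q`) by an upper triangular matrix `A` is `1 + A⁻¹ E_pq A`, and
`E_pq A E_pq = A_qp E_pq = 0`, so `1 + E_pq` commutes with all its conjugates in the upper
triangular group: the assignment factors through `K₃`. There `[[x₂,x₁],x₃]` maps to a
nontrivial matrix (a transvection in the corner `(0, 3)`); for `[[x₃,x₁],x₂]` exchange the images
of `x₂` and `x₃`.
-/

theorem pcomm_eq_one_iff {G : Type*} [Group G] {x y : G} : pcomm x y = 1 ↔ Commute x y := by
  rw [show pcomm x y = (y * x)⁻¹ * (x * y) by simp only [pcomm]; group, inv_mul_eq_one]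
  exact eq_comm

theorem map_pcomm {G H : Type*} [Group G] [Group H] (f : G →* H) (x y : G) :
    f (pcomm x y) = pcomm (f x) (f y) := by
  simp only [pcomm, map_mul, map_inv]

section ReducedFreeGroup

variable {G : Type*} [Group G] {k : ℕ}

theorem normalClosure_reducedRels_le_ker (v : Fin k → G)
    (hv : ∀ i, ∀ g ∈ Subgroup.closure (Set.range v), Commute (v i) (g⁻¹ * v i * g)) :
    Subgroup.normalClosure (reducedRels k) ≤ (FreeGroup.lift v).ker := by
  refine Subgroup.normalClosure_le_normal ?_
  rintro _ ⟨i, g, rfl⟩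
  have hg : FreeGroup.lift v g ∈ Subgroup.closure (Set.range v) := by
    rw [← FreeGroup.range_lift_eq_closure]
    exact ⟨g, rfl⟩
  rw [SetLike.mem_coe, MonoidHom.mem_ker, map_pcomm, pcomm_eq_one_iff]
  simpa only [map_mul, map_inv, FreeGroup.lift_apply_of] using hv i _ hg

def K.lift (v : Fin k → G)
    (hv : ∀ i, ∀ g ∈ Subgroup.closure (Set.range v), Commute (v i) (g⁻¹ * v i * g)) :
    K k →* G :=
  QuotientGroup.lift _ (FreeGroup.lift v) (normalClosure_reducedRels_le_ker v hv)

@[simp]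
theorem K.lift_xg (v : Fin k → G)
    (hv : ∀ i, ∀ g ∈ Subgroup.closure (Set.range v), Commute (v i) (g⁻¹ * v i * g)) (i : Fin k) :
    K.lift v hv (xg i) = v i := by
  simp [K.lift, xg]

end ReducedFreeGroup

theorem commute_one_add_conj {R : Type*} [Ring R] {n v w : R} (hvw : v * w = 1)
    (hv : n * v * n = 0) (hw : n * w * n = 0) : Commute (1 + n) (v * (1 + n) * w) := by
  have hconj : v * (1 + n) * w = 1 + v * n * w := by
    rw [mul_add, mul_one, add_mul, hvw]
  have hleft : n * (v * n * w) = 0 := by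
    rw [← mul_assoc, ← mul_assoc, hv, zero_mul]
  have hright : v * n * w * n = 0 := by
    rw [mul_assoc, mul_assoc, ← mul_assoc n, hw, mul_zero]
  rw [hconj, Commute, SemiconjBy]
  simp only [mul_add, add_mul, mul_one, one_mul, hleft, hright, add_zero]
  abel

namespace Matrix

variable {n R : Type*} [Fintype n] [DecidableEq n] [CommRing R]

theorem BlockTriangular.single_mul_mul_single_eq_zero {α : Type*} [LT α] {b : n → α}
    {M : Matrix n n R} (hM : M.BlockTriangular b) {p q : n} (hpq : b p < b q) (c d : R) :
    single p q c * M * single p q d = 0 := by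
  rw [single_mul_mul_single, hM hpq, mul_zero, zero_mul, single_zero]

variable (n R) [LinearOrder n]

def SpecialLinearGroup.upperTriangular : Subgroup (SpecialLinearGroup n R) where
  carrier := {A | (A : Matrix n n R).BlockTriangular id}
  one_mem' := blockTriangular_one
  mul_mem' hA hB := hA.mul hB
  inv_mem' {A} hA := by
    have hleft : ((A⁻¹ : SpecialLinearGroup n R) : Matrix n n R) * A = 1 := by
      rw [← SpecialLinearGroup.coe_mul, inv_mul_cancel, SpecialLinearGroup.coe_one]
    have hright : (A : Matrix n n R) * (A⁻¹ : SpecialLinearGroup n R) = 1 := by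
      rw [← SpecialLinearGroup.coe_mul, mul_inv_cancel, SpecialLinearGroup.coe_one]
    have : Invertible (A : Matrix n n R) := ⟨_, hleft, hright⟩
    have hinv := blockTriangular_inv_of_blockTriangular hA
    rwa [inv_eq_left_inv hleft] at hinv

variable {n R}

theorem SpecialLinearGroup.commute_transvection_conj {p q : n} (hpq : p < q) (c : R)
    {A : SpecialLinearGroup n R} (hA : A ∈ upperTriangular n R) :
    Commute (SpecialLinearGroup.transvection hpq.ne c)
      (A⁻¹ * SpecialLinearGroup.transvection hpq.ne c * A) := by
  have hAinv := inv_mem hA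
  refine Subtype.ext ?_
  simp only [coe_mul, transvection_coe]
  exact commute_one_add_conj (congrArg Subtype.val (inv_mul_cancel A))
    (hAinv.single_mul_mul_single_eq_zero hpq c c) (hA.single_mul_mul_single_eq_zero hpq c c)

theorem SpecialLinearGroup.commute_conj_of_eq_transvection {ι : Type*}
    (v : ι → SpecialLinearGroup n R)
    (hv : ∀ i, ∃ (p q : n) (hpq : p < q) (c : R),
      v i = SpecialLinearGroup.transvection hpq.ne c) (i : ι) :
    ∀ g ∈ Subgroup.closure (Set.range v), Commute (v i) (g⁻¹ * v i * g) := by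
  have hle : Subgroup.closure (Set.range v) ≤ upperTriangular n R := by
    rw [Subgroup.closure_le]
    rintro _ ⟨j, rfl⟩
    obtain ⟨p, q, hpq, c, hj⟩ := hv j
    rw [hj]
    exact blockTriangular_transvection hpq.le c
  intro g hg
  obtain ⟨p, q, hpq, c, hi⟩ := hv i
  rw [hi]
  exact commute_transvection_conj hpq c (hle hg)

end Matrix

open Matrix in
def superdiagonalTransvection (i : Fin 3) : SpecialLinearGroup (Fin 4) (ZMod 2) :=
  SpecialLinearGroup.transvection (Fin.castSucc_lt_succ (i := i)).ne 1

theorem commute_conj_superdiagonalTransvection_comp (σ : Fin 3 → Fin 3) (i : Fin 3) :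
    ∀ g ∈ Subgroup.closure (Set.range (superdiagonalTransvection ∘ σ)),
      Commute (superdiagonalTransvection (σ i)) (g⁻¹ * superdiagonalTransvection (σ i) * g) :=
  Matrix.SpecialLinearGroup.commute_conj_of_eq_transvection _
    (fun _ => ⟨_, _, Fin.castSucc_lt_succ, 1, rfl⟩) i

theorem pcomm_pcomm_superdiagonalTransvection_ne_one :
    pcomm (pcomm (superdiagonalTransvection 1) (superdiagonalTransvection 0))
      (superdiagonalTransvection 2) ≠ 1 := by
  decide +kernel

/-- The basis commutators `[[x₂,x₁],x₃]` and `[[x₃,x₁],x₂]` are nontrivial in `K₃`. -/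
theorem weight_three_commutators_nontrivial :
    pcomm (pcomm (xg 1) (xg 0)) (xg 2) ≠ (1 : K 3) ∧
    pcomm (pcomm (xg 2) (xg 0)) (xg 1) ≠ (1 : K 3) := by
  have key := pcomm_pcomm_superdiagonalTransvection_ne_one
  constructor
  · refine ne_one_of_map
      (f := K.lift superdiagonalTransvection (commute_conj_superdiagonalTransvection_comp id)) ?_
    simpa [map_pcomm] using key
  · refine ne_one_of_map (f := K.lift (superdiagonalTransvection ∘ Equiv.swap 1 2)
      (commute_conj_superdiagonalTransvection_comp _)) ?_
    simpa [map_pcomm, Equiv.swap_apply_of_ne_of_ne] using key
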